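/- arXiv:2206.01503 — 3 statements merged into one kernel-verified Lean document; each statement's English description precedes it below -/
import Mathlib

section
/- Let A = (A_1, A_2) with A_1 = [[0,1],[0,0]] and A_2 = [[1,0],[0,−1]]. Then dist(A, C² I)² ≥ 3/2 while max_{‖x‖=1} var_x(A) = 4/3; hence dist(A, C² I)² > max_{‖x‖=1} var_x(A). -/
open Matrix

/-- The ℓ²-operator norm of a complex matrix. -/
noncomputable def matOpNorm {n : Type*} [Fintype n] [DecidableEq n]
    (M : Matrix n n ℂ) : ℝ :=
  ‖Matrix.toEuclideanCLM (𝕜 := ℂ) M‖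

/-- The norm `‖A‖ = ‖∑ⱼ Aⱼ* Aⱼ‖^{1/2}` of a tuple of matrices. -/
noncomputable def tupNorm {n : Type*} [Fintype n] [DecidableEq n] {d : ℕ}
    (A : Fin d → Matrix n n ℂ) : ℝ :=
  Real.sqrt (matOpNorm (∑ j, (A j)ᴴ * A j))

/-- The squared euclidean norm of a complex vector. -/
noncomputable def vecNormSq {n : Type*} [Fintype n] (y : n → ℂ) : ℝ := (star y ⬝ᵥ y).re

/-- `var_x(A) = ‖Ax‖² - ∑ⱼ |⟨x, Aⱼx⟩|²` for a tuple of matrices. -/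
noncomputable def matVar {n : Type*} [Fintype n] {d : ℕ}
    (A : Fin d → Matrix n n ℂ) (x : n → ℂ) : ℝ :=
  (∑ j, vecNormSq ((A j).mulVec x)) -
    ∑ j, ‖star x ⬝ᵥ (A j).mulVec x‖ ^ 2
/-!
Since `A₁` and `A₂` are traceless, the distance bound is a trace computation: the diagonal
entries of `M = ∑ⱼ (Aⱼ - zⱼ)*(Aⱼ - zⱼ)` are at most `‖M‖`, so
`2‖M‖ ≥ tr M = tr A₁*A₁ + tr A₂*A₂ + 2(|z₁|² + |z₂|²) ≥ 1 + 2`.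
For a unit vector `x` with `t = |x₂|²` the variance is `4t - 3t² = 4/3 - 3(t - 2/3)²`.
-/

open scoped ComplexInnerProductSpace

lemma le_sq_iInf_of_le_sq {ι : Type*} [Nonempty ι] {f : ι → ℝ} (hf : ∀ i, 0 ≤ f i) {c : ℝ}
    (h : ∀ i, c ≤ f i ^ 2) : c ≤ (⨅ i, f i) ^ 2 := by
  have hsqrt : √c ≤ ⨅ i, f i := le_ciInf fun i => (Real.sqrt_le_left (hf i)).mpr (h i)
  exact (Real.sqrt_le_left (Real.iInf_nonneg hf)).mp hsqrt

section OperatorNorm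

variable {n : Type*} [Fintype n] [DecidableEq n]

lemma matOpNorm_nonneg (M : Matrix n n ℂ) : 0 ≤ matOpNorm M := norm_nonneg _

lemma re_diag_le_matOpNorm (M : Matrix n n ℂ) (i : n) : (M i i).re ≤ matOpNorm M := by
  set T := toEuclideanCLM (𝕜 := ℂ) M
  set e : EuclideanSpace ℂ n := EuclideanSpace.single i 1
  have he : ‖e‖ = 1 := by simp [e]
  have hdiag : ⟪e, T e⟫ = M i i := by
    simp [e, T, EuclideanSpace.inner_single_left, mulVec_single]
  calc (M i i).re ≤ ‖M i i‖ := Complex.re_le_norm _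
    _ = ‖⟪e, T e⟫‖ := by rw [hdiag]
    _ ≤ ‖e‖ * ‖T e‖ := norm_inner_le_norm _ _
    _ ≤ ‖T‖ := by rw [he, one_mul]; exact T.unit_le_opNorm e he.le

lemma re_trace_le_card_mul_matOpNorm (M : Matrix n n ℂ) :
    M.trace.re ≤ Fintype.card n * matOpNorm M := by
  rw [trace, Complex.re_sum]
  simpa using Finset.sum_le_sum fun i (_ : i ∈ Finset.univ) => re_diag_le_matOpNorm M i

lemma trace_conjTranspose_mul_self_sub_smul_one (B : Matrix n n ℂ) (hB : B.trace = 0)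
    (z : ℂ) :
    ((B - z • 1)ᴴ * (B - z • 1)).trace =
      (Bᴴ * B).trace + Fintype.card n * Complex.normSq z := by
  simp [conjTranspose_sub, sub_mul, mul_sub, trace_sub, trace_conjTranspose, hB,
    Complex.normSq_eq_conj_mul_self]
  ring

lemma re_sum_trace_le_card_mul_tupNorm_sub_smul_one_sq {d : ℕ} (A : Fin d → Matrix n n ℂ)
    (hA : ∀ j, (A j).trace = 0) (z : Fin d → ℂ) :
    (∑ j, ((A j)ᴴ * A j).trace).re ≤
      Fintype.card n * tupNorm (fun j => A j - z j • 1) ^ 2 := by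
  rw [tupNorm, Real.sq_sqrt (matOpNorm_nonneg _)]
  refine le_trans ?_ (re_trace_le_card_mul_matOpNorm _)
  rw [trace_sum, Complex.re_sum, Complex.re_sum]
  refine Finset.sum_le_sum fun j _ => ?_
  rw [trace_conjTranspose_mul_self_sub_smul_one _ (hA j)]
  simp only [Complex.add_re, ← Complex.ofReal_natCast, ← Complex.ofReal_mul, Complex.ofReal_re]
  exact le_add_of_nonneg_right (mul_nonneg (Nat.cast_nonneg _) (Complex.normSq_nonneg _))

end OperatorNorm

lemma vecNormSq_eq_sum_normSq {n : Type*} [Fintype n] (y : n → ℂ) :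
    vecNormSq y = ∑ i, Complex.normSq (y i) := by
  simp [vecNormSq, dotProduct, Complex.re_sum, Complex.normSq_apply, Complex.mul_re]

abbrev counterexamplePair : Fin 2 → Matrix (Fin 2) (Fin 2) ℂ :=
  ![!![0, 1; 0, 0], !![1, 0; 0, -1]]

lemma three_halves_le_tupNorm_counterexamplePair_sub_smul_one_sq (z : Fin 2 → ℂ) :
    3 / 2 ≤ tupNorm (fun j => counterexamplePair j - z j • 1) ^ 2 := by
  have htrace : ∀ j, (counterexamplePair j).trace = 0 := by
    intro j
    fin_cases j <;> simp [trace_fin_two]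
  have hsum : ∑ j, ((counterexamplePair j)ᴴ * counterexamplePair j).trace = 3 := by
    norm_num [Fin.sum_univ_two, trace_fin_two, mul_apply, conjTranspose_apply]
  have h := re_sum_trace_le_card_mul_tupNorm_sub_smul_one_sq counterexamplePair htrace z
  rw [hsum, Fintype.card_fin] at h
  norm_num at h
  linarith

lemma matVar_counterexamplePair (x : Fin 2 → ℂ) :
    matVar counterexamplePair x =
      Complex.normSq (x 1) + (Complex.normSq (x 0) + Complex.normSq (x 1)) -
        Complex.normSq (x 0) * Complex.normSq (x 1) -
        (Complex.normSq (x 0) - Complex.normSq (x 1)) ^ 2 := by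
  simp [matVar, Fin.sum_univ_two, vecNormSq_eq_sum_normSq, mulVec, dotProduct,
    ← Complex.normSq_eq_conj_mul_self, Complex.sq_norm, ← Complex.ofReal_neg,
    ← Complex.ofReal_add]
  ring

lemma matVar_counterexamplePair_of_unit {x : Fin 2 → ℂ} (hx : star x ⬝ᵥ x = 1) :
    matVar counterexamplePair x = 4 / 3 - 3 * (Complex.normSq (x 1) - 2 / 3) ^ 2 := by
  have hunit := vecNormSq_eq_sum_normSq x
  rw [vecNormSq, hx, Fin.sum_univ_two, Complex.one_re] at hunit
  rw [matVar_counterexamplePair, show Complex.normSq (x 0) = 1 - Complex.normSq (x 1) by linarith]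
  ring

lemma isGreatest_matVar_counterexamplePair :
    IsGreatest {v : ℝ | ∃ x : Fin 2 → ℂ, star x ⬝ᵥ x = 1 ∧ v = matVar counterexamplePair x}
      (4 / 3) := by
  constructor
  · set x : Fin 2 → ℂ := ![((√(1 / 3) : ℝ) : ℂ), ((√(2 / 3) : ℝ) : ℂ)]
    have hx : star x ⬝ᵥ x = 1 := by
      simp only [x, dotProduct, Fin.sum_univ_two, Pi.star_apply, cons_val_zero, cons_val_one,
        Complex.star_def, Complex.conj_ofReal, ← Complex.ofReal_mul, ← Complex.ofReal_add]
      rw [Real.mul_self_sqrt (by norm_num), Real.mul_self_sqrt (by norm_num)]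
      norm_num
    refine ⟨x, hx, ?_⟩
    rw [matVar_counterexamplePair_of_unit hx]
    simp [x, Complex.normSq_ofReal]
  · rintro _ ⟨x, hx, rfl⟩
    rw [matVar_counterexamplePair_of_unit hx]
    nlinarith [sq_nonneg (Complex.normSq (x 1) - 2 / 3)]

/-- for `A = ([[0,1],[0,0]], [[1,0],[0,-1]])`, one has
`dist(A, ℂ²I)² ≥ 3/2` while `max_{‖x‖=1} var_x(A) = 4/3`; in particular
`dist(A, ℂ²I)² > max_{‖x‖=1} var_x(A)`. -/
theorem two_by_two_counterexample :
    let A : Fin 2 → Matrix (Fin 2) (Fin 2) ℂ := ![!![0, 1; 0, 0], !![1, 0; 0, -1]]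
    (⨅ z : Fin 2 → ℂ,
        tupNorm (fun j => A j - z j • (1 : Matrix (Fin 2) (Fin 2) ℂ))) ^ 2 ≥ 3 / 2 ∧
      IsGreatest {v : ℝ | ∃ x : Fin 2 → ℂ, star x ⬝ᵥ x = 1 ∧ v = matVar A x} (4 / 3) ∧
      (⨅ z : Fin 2 → ℂ,
          tupNorm (fun j => A j - z j • (1 : Matrix (Fin 2) (Fin 2) ℂ))) ^ 2 >
        sSup {v : ℝ | ∃ x : Fin 2 → ℂ, star x ⬝ᵥ x = 1 ∧ v = matVar A x} := by
  intro A
  have hdist : 3 / 2 ≤ (⨅ z : Fin 2 → ℂ, tupNorm (fun j => A j - z j • 1)) ^ 2 :=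
    le_sq_iInf_of_le_sq (fun _ => Real.sqrt_nonneg _)
      three_halves_le_tupNorm_counterexamplePair_sub_smul_one_sq
  have hvar := isGreatest_matVar_counterexamplePair
  refine ⟨hdist, hvar, ?_⟩
  rw [hvar.csSup_eq]
  linarith
end

section
/- If 0 ∈ W₀(A), i.e. there exist unit vectors x_n with ‖Ax_n‖ → ‖A‖ and ⟨x_n, A_j x_n⟩ → 0 for all j, then for every z ∈ C^d, ‖A − zI‖² ≥ ‖A‖² + ‖z‖². -/
/-! For a unit vector `x`, `∑ⱼ ‖(Aⱼ - zⱼ) x‖² = ‖Ax‖² - 2 Re ∑ⱼ zⱼ conj ⟨x, Aⱼx⟩ + ‖z‖²` and the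
left side is at most `‖A - zI‖²`. Along the sequence `xₙ` the first term tends to `‖A‖²` and the
cross term to `0`. -/

open Filter Topology

variable {H : Type*} [NormedAddCommGroup H] [InnerProductSpace ℂ H] [CompleteSpace H]

/-- The norm `‖A‖ = ‖∑ⱼ Aⱼ* Aⱼ‖^{1/2}` of a tuple of operators viewed as an operator
`H → H^d`. -/
noncomputable def opTupNorm {d : ℕ} (A : Fin d → H →L[ℂ] H) : ℝ :=
  Real.sqrt ‖∑ j, ContinuousLinearMap.adjoint (A j) * A j‖

/-- `var_x(A) = ‖Ax‖² - ∑ⱼ |⟨x, Aⱼx⟩|²`. -/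
noncomputable def opVar {d : ℕ} (A : Fin d → H →L[ℂ] H) (x : H) : ℝ :=
  (∑ j, ‖A j x‖ ^ 2) - ∑ j, ‖(inner ℂ x (A j x) : ℂ)‖ ^ 2

/-- The joint maximal numerical range `W₀(A)`: all limits of
`(⟨xₙ, A₁xₙ⟩, …, ⟨xₙ, A_d xₙ⟩)` along sequences of unit vectors `xₙ` with
`‖A xₙ‖ → ‖A‖`. -/
def W0 {d : ℕ} (A : Fin d → H →L[ℂ] H) : Set (Fin d → ℂ) :=
  {lam | ∃ x : ℕ → H, (∀ n, ‖x n‖ = 1) ∧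
    Tendsto (fun n => Real.sqrt (∑ j, ‖A j (x n)‖ ^ 2)) atTop (nhds (opTupNorm A)) ∧
    ∀ j, Tendsto (fun n => (inner ℂ (x n) (A j (x n)) : ℂ)) atTop (nhds (lam j))}

lemma sum_norm_sq_apply_eq_re_inner {d : ℕ} (B : Fin d → H →L[ℂ] H) (x : H) :
    ∑ j, ‖B j x‖ ^ 2 =
      (inner ℂ x ((∑ j, ContinuousLinearMap.adjoint (B j) * B j) x) : ℂ).re := by
  rw [sum_apply, inner_sum, Complex.re_sum]
  refine Finset.sum_congr rfl fun j _ => ?_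
  rw [mul_apply_eq_comp, ContinuousLinearMap.adjoint_inner_right]
  exact norm_sq_eq_re_inner (𝕜 := ℂ) _

lemma sum_norm_sq_apply_le_opTupNorm_sq {d : ℕ} (B : Fin d → H →L[ℂ] H) (x : H) :
    ∑ j, ‖B j x‖ ^ 2 ≤ opTupNorm B ^ 2 * ‖x‖ ^ 2 := by
  set T := ∑ j, ContinuousLinearMap.adjoint (B j) * B j
  rw [sum_norm_sq_apply_eq_re_inner, opTupNorm, Real.sq_sqrt (norm_nonneg T)]
  calc (inner ℂ x (T x) : ℂ).re ≤ ‖(inner ℂ x (T x) : ℂ)‖ := Complex.re_le_norm _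
    _ ≤ ‖x‖ * ‖T x‖ := norm_inner_le_norm x (T x)
    _ ≤ ‖x‖ * (‖T‖ * ‖x‖) := by gcongr; exact T.le_opNorm x
    _ = ‖T‖ * ‖x‖ ^ 2 := by ring

lemma sum_norm_sq_sub_smul_apply {𝕜 E : Type*} [RCLike 𝕜] [NormedAddCommGroup E]
    [InnerProductSpace 𝕜 E] {d : ℕ} (A : Fin d → E →L[𝕜] E) (z : Fin d → 𝕜) (x : E) :
    ∑ j, ‖(A j - z j • (1 : E →L[𝕜] E)) x‖ ^ 2 =
      ∑ j, ‖A j x‖ ^ 2 - 2 * ∑ j, RCLike.re (z j * starRingEnd 𝕜 (inner 𝕜 x (A j x)))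
        + (∑ j, ‖z j‖ ^ 2) * ‖x‖ ^ 2 := by
  rw [Finset.mul_sum, Finset.sum_mul, ← Finset.sum_sub_distrib, ← Finset.sum_add_distrib]
  refine Finset.sum_congr rfl fun j _ => ?_
  rw [sub_apply, smul_apply, one_apply_eq_self, @norm_sub_sq 𝕜, inner_smul_right, inner_conj_symm,
    norm_smul, mul_pow]

/-- if `0 ∈ W₀(A)`, i.e. there are unit vectors `xₙ` with
`‖Axₙ‖ → ‖A‖` and `⟨xₙ, Aⱼxₙ⟩ → 0` for all `j`, then for every `z ∈ ℂᵈ`,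
`‖A - zI‖² ≥ ‖A‖² + ‖z‖²`. -/
theorem norm_sub_sq_ge_of_zero_mem_W0 {d : ℕ} (A : Fin d → H →L[ℂ] H)
    (x : ℕ → H) (hx : ∀ n, ‖x n‖ = 1)
    (hnorm : Tendsto (fun n => Real.sqrt (∑ j, ‖A j (x n)‖ ^ 2)) atTop
      (nhds (opTupNorm A)))
    (hinner : ∀ j, Tendsto (fun n => (inner ℂ (x n) (A j (x n)) : ℂ)) atTop (nhds 0)) :
    ∀ z : Fin d → ℂ,
      opTupNorm A ^ 2 + ∑ j, ‖z j‖ ^ 2 ≤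
        opTupNorm (fun j => A j - z j • (1 : H →L[ℂ] H)) ^ 2 := by
  intro z
  have hA : Tendsto (fun n => ∑ j, ‖A j (x n)‖ ^ 2) atTop (𝓝 (opTupNorm A ^ 2)) := by
    refine (hnorm.pow 2).congr fun n => ?_
    exact Real.sq_sqrt (Finset.sum_nonneg fun j _ => sq_nonneg _)
  have hcross : Tendsto
      (fun n => ∑ j, RCLike.re (z j * starRingEnd ℂ (inner ℂ (x n) (A j (x n))))) atTop (𝓝 0) := by
    simpa using tendsto_finsetSum Finset.univ fun j _ =>
      (RCLike.continuous_re.comp (continuous_const.mul RCLike.continuous_conj)).tendsto 0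
        |>.comp (hinner j)
  have hlim := (hA.sub (hcross.const_mul 2)).add_const (∑ j, ‖z j‖ ^ 2)
  rw [mul_zero, sub_zero] at hlim
  refine le_of_tendsto' hlim fun n => ?_
  calc _ = ∑ j, ‖(A j - z j • (1 : H →L[ℂ] H)) (x n)‖ ^ 2 := by
        rw [sum_norm_sq_sub_smul_apply, hx n, one_pow, mul_one]
    _ ≤ opTupNorm (fun j => A j - z j • (1 : H →L[ℂ] H)) ^ 2 * ‖x n‖ ^ 2 :=
        sum_norm_sq_apply_le_opTupNorm_sq _ _
    _ = _ := by rw [hx n, one_pow, mul_one]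
end

section
/- Let A be a tuple of bounded operators on a Hilbert space H, with unique z⁰ minimizing ‖A − zI‖ and A⁰ = A − z⁰I. If the joint maximal numerical range W₀(A⁰) is convex, then sup_{‖x‖=1} var_x(A) = dist(A, C^d I)². -/
open Filter Topology

variable {H : Type*} [NormedAddCommGroup H] [InnerProductSpace ℂ H] [CompleteSpace H]

/-! A scalar shift `A ↦ A - zI` does not change the variance at a unit vector, and
`var_x(A⁰) ≤ ‖A⁰x‖² ≤ ‖A⁰‖²`, so the supremum is at most `‖A⁰‖² = dist(A, ℂᵈI)²`.
Conversely, along a norming sequence whose quadratic forms tend to `λ ∈ W₀(A⁰)` the variances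
tend to `‖A⁰‖² - |λ|²`, so it suffices that `0 ∈ closure W₀(A⁰)`. Otherwise Hahn–Banach
separates `0` from the convex set `W₀(A⁰)` by a functional with `Re f ≥ u > 0` there, hence, by
compactness, on the quadratic forms of all almost norming unit vectors. The expansion
`‖(A⁰ - t c̄)x‖² = ‖A⁰x‖² - 2t Re f(⟨x, A⁰x⟩) + t²|c|²`, where `f(λ) = Σ cⱼλⱼ`, shows that a
small shift `z⁰ + t c̄` has strictly smaller norm, contradicting the minimality of `z⁰`. -/

open scoped InnerProductSpace ComplexConjugate

section UnitVector

variable {E : Type*} [NormedAddCommGroup E] [InnerProductSpace ℂ E] {d : ℕ}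
  (A : Fin d → E →L[ℂ] E) {x : E}

lemma norm_sub_smul_sq_of_norm_eq_one (hx : ‖x‖ = 1) (v : E) (w : ℂ) :
    ‖v - w • x‖ ^ 2 = ‖v‖ ^ 2 - 2 * (conj w * ⟪x, v⟫_ℂ).re + ‖w‖ ^ 2 := by
  have hre : (w * ⟪v, x⟫_ℂ).re = (conj w * ⟪x, v⟫_ℂ).re := by
    rw [← Complex.conj_re, map_mul, inner_conj_symm, mul_comm]
  rw [@norm_sub_sq ℂ, inner_smul_right, norm_smul, hx, mul_one, RCLike.re_to_complex, hre]

lemma sum_norm_sub_smul_one_apply_sq (z : Fin d → ℂ) (hx : ‖x‖ = 1) :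
    ∑ j, ‖(A j - z j • (1 : E →L[ℂ] E)) x‖ ^ 2 =
      ∑ j, ‖A j x‖ ^ 2 - 2 * ∑ j, (conj (z j) * ⟪x, A j x⟫_ℂ).re + ∑ j, ‖z j‖ ^ 2 := by
  simp only [sub_apply, smul_apply, one_apply_eq_self, norm_sub_smul_sq_of_norm_eq_one hx,
    Finset.sum_add_distrib, Finset.sum_sub_distrib, Finset.mul_sum]

lemma sum_norm_sub_ofReal_mul_conj_smul_one_apply_sq (c : Fin d → ℂ) (t : ℝ) (hx : ‖x‖ = 1) :
    ∑ j, ‖(A j - ((t : ℂ) * conj (c j)) • (1 : E →L[ℂ] E)) x‖ ^ 2 =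
      ∑ j, ‖A j x‖ ^ 2 - 2 * t * (∑ j, ⟪x, A j x⟫_ℂ * c j).re + t ^ 2 * ∑ j, ‖c j‖ ^ 2 := by
  rw [sum_norm_sub_smul_one_apply_sq A _ hx, Complex.re_sum, Finset.mul_sum, Finset.mul_sum,
    Finset.mul_sum]
  simp only [map_mul, Complex.conj_ofReal, Complex.conj_conj, norm_mul, Complex.norm_real,
    Complex.norm_conj, Real.norm_eq_abs, mul_pow, sq_abs]
  congr 2
  refine Finset.sum_congr rfl fun j _ => ?_
  rw [mul_assoc, Complex.re_ofReal_mul, mul_comm (c j), mul_assoc]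

lemma opVar_sub_smul_one (z : Fin d → ℂ) (hx : ‖x‖ = 1) :
    opVar (fun j => A j - z j • (1 : E →L[ℂ] E)) x = opVar A x := by
  have hform : ∀ j, ⟪x, (A j - z j • (1 : E →L[ℂ] E)) x⟫_ℂ = ⟪x, A j x⟫_ℂ - z j • 1 := fun j => by
    simp [inner_self_eq_norm_sq_to_K, hx]
  simp only [opVar, sum_norm_sub_smul_one_apply_sq A z hx, hform,
    norm_sub_smul_sq_of_norm_eq_one norm_one, RCLike.inner_apply, map_one, mul_one,
    Finset.sum_add_distrib, Finset.sum_sub_distrib, Finset.mul_sum]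
  ring

lemma norm_inner_apply_tuple_le (hx : ‖x‖ = 1) : ‖fun j => ⟪x, A j x⟫_ℂ‖ ≤ ‖A‖ := by
  refine (pi_norm_le_iff_of_nonneg (norm_nonneg A)).2 fun j => ?_
  calc ‖⟪x, A j x⟫_ℂ‖ ≤ ‖x‖ * ‖A j x‖ := norm_inner_le_norm _ _
    _ ≤ ‖A j‖ := by simpa [hx] using (A j).le_opNorm x
    _ ≤ ‖A‖ := norm_le_pi_norm A j

end UnitVector

noncomputable def columnOp {E F : Type*} [NormedAddCommGroup E] [NormedSpace ℂ E]
    [NormedAddCommGroup F] [NormedSpace ℂ F] {d : ℕ} (A : Fin d → E →L[ℂ] F) :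
    E →L[ℂ] PiLp 2 (fun _ : Fin d => F) :=
  (PiLp.continuousLinearEquiv 2 ℂ (fun _ : Fin d => F)).symm.toContinuousLinearMap.comp
    (ContinuousLinearMap.pi A)

section ColumnOperator

variable {E F : Type*} [NormedAddCommGroup E] [NormedSpace ℂ E] [NormedAddCommGroup F]
  [NormedSpace ℂ F] {d : ℕ} (A : Fin d → E →L[ℂ] F)

@[simp]
lemma columnOp_apply (x : E) (j : Fin d) : columnOp A x j = A j x := rfl

lemma norm_columnOp_apply_sq (x : E) : ‖columnOp A x‖ ^ 2 = ∑ j, ‖A j x‖ ^ 2 := by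
  simp [PiLp.norm_sq_eq_of_L2]

end ColumnOperator

section OpTupNorm

variable {d : ℕ} (A : Fin d → H →L[ℂ] H)

lemma opTupNorm_nonneg : 0 ≤ opTupNorm A := Real.sqrt_nonneg _

lemma adjoint_comp_columnOp :
    (columnOp A).adjoint.comp (columnOp A) = ∑ j, (A j).adjoint * A j := by
  ext x
  refine ext_inner_left ℂ fun v => ?_
  simp [ContinuousLinearMap.adjoint_inner_right, PiLp.inner_apply, inner_sum]

lemma opTupNorm_eq_norm_columnOp : opTupNorm A = ‖columnOp A‖ := by
  rw [opTupNorm, ← adjoint_comp_columnOp, ContinuousLinearMap.norm_adjoint_comp_self,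
    Real.sqrt_mul_self (norm_nonneg _)]

lemma sum_norm_sq_le_opTupNorm_sq {x : H} (hx : ‖x‖ = 1) :
    ∑ j, ‖A j x‖ ^ 2 ≤ opTupNorm A ^ 2 := by
  rw [← norm_columnOp_apply_sq, opTupNorm_eq_norm_columnOp]
  gcongr
  simpa [hx] using (columnOp A).le_opNorm x

lemma opTupNorm_sq_le_of_forall [Nontrivial H] {c : ℝ}
    (h : ∀ x : H, ‖x‖ = 1 → ∑ j, ‖A j x‖ ^ 2 ≤ c) : opTupNorm A ^ 2 ≤ c := by
  obtain ⟨x₀, hx₀⟩ := exists_norm_eq H zero_le_one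
  have hc : 0 ≤ c := (Finset.sum_nonneg fun j _ => sq_nonneg _).trans (h x₀ hx₀)
  have hnorm : ‖columnOp A‖ ≤ √c :=
    ContinuousLinearMap.opNorm_le_of_unit_norm (Real.sqrt_nonneg c) fun x hx =>
      Real.le_sqrt_of_sq_le ((norm_columnOp_apply_sq A x).trans_le (h x hx))
  rw [opTupNorm_eq_norm_columnOp]
  calc ‖columnOp A‖ ^ 2 ≤ √c ^ 2 := by gcongr
    _ = c := Real.sq_sqrt hc

lemma opVar_le_opTupNorm_sq {x : H} (hx : ‖x‖ = 1) : opVar A x ≤ opTupNorm A ^ 2 := by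
  have hA := sum_norm_sq_le_opTupNorm_sq A hx
  have hforms : 0 ≤ ∑ j, ‖⟪x, A j x⟫_ℂ‖ ^ 2 := Finset.sum_nonneg fun j _ => sq_nonneg _
  unfold opVar
  linarith

end OpTupNorm
section JointMaximalNumericalRange

variable {d : ℕ} (A : Fin d → H →L[ℂ] H)

lemma exists_subseq_tendsto_mem_W0 {x : ℕ → H} (hx : ∀ n, ‖x n‖ = 1)
    (hnorm : Tendsto (fun n => √(∑ j, ‖A j (x n)‖ ^ 2)) atTop (𝓝 (opTupNorm A))) :
    ∃ lam ∈ W0 A, ∃ φ : ℕ → ℕ, StrictMono φ ∧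
      Tendsto (fun n j => ⟪x (φ n), A j (x (φ n))⟫_ℂ) atTop (𝓝 lam) := by
  have hbound : ∀ n, (fun j => ⟪x n, A j (x n)⟫_ℂ) ∈ Metric.closedBall 0 ‖A‖ := fun n =>
    mem_closedBall_zero_iff.2 (norm_inner_apply_tuple_le A (hx n))
  obtain ⟨lam, -, φ, hφ, hlim⟩ := (isCompact_closedBall _ _).tendsto_subseq hbound
  exact ⟨lam, ⟨x ∘ φ, fun n => hx _, hnorm.comp hφ.tendsto_atTop, tendsto_pi_nhds.1 hlim⟩,
    φ, hφ, hlim⟩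

lemma exists_forall_mem_of_W0_subset {U : Set (Fin d → ℂ)} (hU : IsOpen U) (hWU : W0 A ⊆ U) :
    ∃ ε > 0, ∀ x : H, ‖x‖ = 1 → opTupNorm A ^ 2 - ε < ∑ j, ‖A j x‖ ^ 2 →
      (fun j => ⟪x, A j x⟫_ℂ) ∈ U := by
  by_contra! h
  choose x hx hnear hout using fun n : ℕ => h (1 / (n + 1)) Nat.one_div_pos_of_nat
  have hlower : Tendsto (fun n : ℕ => opTupNorm A ^ 2 - 1 / (n + 1)) atTop
      (𝓝 (opTupNorm A ^ 2)) := by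
    simpa using tendsto_const_nhds.sub (tendsto_one_div_add_atTop_nhds_zero_nat (𝕜 := ℝ))
  have hsq : Tendsto (fun n => ∑ j, ‖A j (x n)‖ ^ 2) atTop (𝓝 (opTupNorm A ^ 2)) :=
    tendsto_of_tendsto_of_tendsto_of_le_of_le hlower tendsto_const_nhds (fun n => (hnear n).le)
      fun n => sum_norm_sq_le_opTupNorm_sq A (hx n)
  have hnorm : Tendsto (fun n => √(∑ j, ‖A j (x n)‖ ^ 2)) atTop (𝓝 (opTupNorm A)) := by
    simpa only [Real.sqrt_sq (opTupNorm_nonneg A)] using hsq.sqrt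
  obtain ⟨lam, hlam, φ, hφ, hlim⟩ := exists_subseq_tendsto_mem_W0 A hx hnorm
  obtain ⟨n, hn⟩ := (hlim.eventually (hU.mem_nhds (hWU hlam))).exists
  exact hout (φ n) hn

lemma opTupNorm_sq_sub_le_sSup_opVar {lam : Fin d → ℂ} (hlam : lam ∈ W0 A) :
    opTupNorm A ^ 2 - ∑ j, ‖lam j‖ ^ 2 ≤ sSup {v : ℝ | ∃ x : H, ‖x‖ = 1 ∧ v = opVar A x} := by
  obtain ⟨x, hx, hnorm, hform⟩ := hlam
  have hsq : Tendsto (fun n => ∑ j, ‖A j (x n)‖ ^ 2) atTop (𝓝 (opTupNorm A ^ 2)) := by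
    simpa [Real.sq_sqrt (Finset.sum_nonneg fun _ _ => sq_nonneg _)] using hnorm.pow 2
  have hvar : Tendsto (fun n => opVar A (x n)) atTop
      (𝓝 (opTupNorm A ^ 2 - ∑ j, ‖lam j‖ ^ 2)) :=
    hsq.sub (tendsto_finsetSum _ fun j _ => (hform j).norm.pow 2)
  have hbdd : BddAbove {v : ℝ | ∃ x : H, ‖x‖ = 1 ∧ v = opVar A x} :=
    ⟨opTupNorm A ^ 2, by rintro v ⟨x, hx, rfl⟩; exact opVar_le_opTupNorm_sq A hx⟩
  exact le_of_tendsto' hvar fun n => le_csSup hbdd ⟨x n, hx n, rfl⟩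

lemma sSup_opVar_eq_of_zero_mem_closure_W0 [Nontrivial H] (h0 : 0 ∈ closure (W0 A)) :
    sSup {v : ℝ | ∃ x : H, ‖x‖ = 1 ∧ v = opVar A x} = opTupNorm A ^ 2 := by
  refine le_antisymm ?_ ?_
  · obtain ⟨x₀, hx₀⟩ := exists_norm_eq H zero_le_one
    exact csSup_le ⟨_, x₀, hx₀, rfl⟩ fun v ⟨x, hx, hv⟩ => hv ▸ opVar_le_opTupNorm_sq A hx
  · have hclosed : IsClosed {lam : Fin d → ℂ | opTupNorm A ^ 2 - ∑ j, ‖lam j‖ ^ 2 ≤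
        sSup {v : ℝ | ∃ x : H, ‖x‖ = 1 ∧ v = opVar A x}} :=
      isClosed_le (by fun_prop) continuous_const
    simpa using hclosed.closure_subset_iff.2 (fun _ => opTupNorm_sq_sub_le_sSup_opVar A) h0

end JointMaximalNumericalRange

section Minimizer

variable {d : ℕ}

lemma exists_opTupNorm_sub_smul_one_lt [Nontrivial H] (B : Fin d → H →L[ℂ] H)
    (f : StrongDual ℂ (Fin d → ℂ)) {ε u : ℝ} (hε : 0 < ε) (hu : 0 < u)
    (hf : ∀ x : H, ‖x‖ = 1 → opTupNorm B ^ 2 - ε < ∑ j, ‖B j x‖ ^ 2 →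
      u ≤ (f fun j => ⟪x, B j x⟫_ℂ).re) :
    ∃ z : Fin d → ℂ, opTupNorm (fun j => B j - z j • (1 : H →L[ℂ] H)) < opTupNorm B := by
  set M := opTupNorm B
  set c : Fin d → ℂ := fun i => f fun j => if i = j then 1 else 0
  set S := ∑ j, ‖c j‖ ^ 2
  set K := ‖f‖ * ‖B‖
  have hS : 0 ≤ S := Finset.sum_nonneg fun j _ => sq_nonneg _
  have hK : 0 ≤ K := by positivity
  have hfK : ∀ x : H, ‖x‖ = 1 → -K ≤ (f fun j => ⟪x, B j x⟫_ℂ).re := fun x hx => by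
    refine neg_le_of_abs_le ((Complex.abs_re_le_norm _).trans ?_)
    exact (f.le_opNorm _).trans
      (mul_le_mul_of_nonneg_left (norm_inner_apply_tuple_le B hx) (norm_nonneg f))
  -- `t` is small enough that `t²S < 2tu` and `2tK + t²S < ε`.
  set t := min (u / (S + 1)) (ε / (2 * K + u + 1))
  have ht : 0 < t := lt_min (by positivity) (by positivity)
  have htu : t * (S + 1) ≤ u := (le_div_iff₀ (by positivity)).1 (min_le_left _ _)
  have htε : t * (2 * K + u + 1) ≤ ε := (le_div_iff₀ (by positivity)).1 (min_le_right _ _)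
  have hexpand : ∀ x : H, ‖x‖ = 1 →
      ∑ j, ‖(B j - ((t : ℂ) * conj (c j)) • (1 : H →L[ℂ] H)) x‖ ^ 2 =
        ∑ j, ‖B j x‖ ^ 2 - 2 * t * (f fun j => ⟪x, B j x⟫_ℂ).re + t ^ 2 * S := fun x hx => by
    have hf_apply : (f fun j => ⟪x, B j x⟫_ℂ) = ∑ j, ⟪x, B j x⟫_ℂ * c j :=
      (f : (Fin d → ℂ) →ₗ[ℂ] ℂ).pi_apply_eq_sum_univ _
    rw [sum_norm_sub_ofReal_mul_conj_smul_one_apply_sq B c t hx, hf_apply]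
  refine ⟨fun j => t * conj (c j), lt_of_pow_lt_pow_left₀ 2 (opTupNorm_nonneg B) ?_⟩
  refine (opTupNorm_sq_le_of_forall _ (c := max (M ^ 2 - 2 * t * u + t ^ 2 * S)
    (M ^ 2 - ε + 2 * t * K + t ^ 2 * S)) fun x hx => ?_).trans_lt
      (max_lt (by nlinarith) (by nlinarith))
  rw [hexpand x hx]
  by_cases hnear : M ^ 2 - ε < ∑ j, ‖B j x‖ ^ 2
  · exact le_max_of_le_left (by nlinarith [hf x hx hnear, sum_norm_sq_le_opTupNorm_sq B hx])
  · exact le_max_of_le_right (by nlinarith [hfK x hx])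

lemma zero_mem_closure_W0_of_forall_opTupNorm_le [Nontrivial H] (A : Fin d → H →L[ℂ] H)
    (z0 : Fin d → ℂ)
    (hz0 : ∀ z : Fin d → ℂ,
      opTupNorm (fun j => A j - z0 j • (1 : H →L[ℂ] H)) ≤
        opTupNorm (fun j => A j - z j • (1 : H →L[ℂ] H)))
    (hconv : Convex ℝ (W0 (fun j => A j - z0 j • (1 : H →L[ℂ] H)))) :
    0 ∈ closure (W0 (fun j => A j - z0 j • (1 : H →L[ℂ] H))) := by
  by_contra h0
  obtain ⟨f, u, hf0, hfW⟩ :=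
    RCLike.geometric_hahn_banach_point_closed (𝕜 := ℂ) hconv.closure isClosed_closure h0
  rw [map_zero, map_zero] at hf0
  obtain ⟨ε, hε, hnear⟩ := exists_forall_mem_of_W0_subset _
    (isOpen_lt continuous_const (by fun_prop) : IsOpen {lam | u < RCLike.re (f lam)})
    fun lam hlam => hfW lam (subset_closure hlam)
  obtain ⟨z, hz⟩ :=
    exists_opTupNorm_sub_smul_one_lt _ f hε hf0 fun x hx hx' => (hnear x hx hx').le
  have hshift : (fun j => A j - z0 j • (1 : H →L[ℂ] H) - z j • 1) =
      fun j => A j - (z0 + z) j • 1 := by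
    ext1 j; simp [add_smul, sub_sub]
  exact (hz0 (z0 + z)).not_gt (hshift ▸ hz)

end Minimizer

/-- if `z⁰` minimizes `‖A - zI‖` and the joint maximal numerical range
`W₀(A⁰)` of `A⁰ = A - z⁰I` is convex, then `sup_{‖x‖=1} var_x(A) = dist(A, ℂᵈI)²`. -/
theorem dist_formula_of_W0_convex [Nontrivial H]
    {d : ℕ} (A : Fin d → H →L[ℂ] H) (z0 : Fin d → ℂ)
    (hz0 : ∀ z : Fin d → ℂ,
      opTupNorm (fun j => A j - z0 j • (1 : H →L[ℂ] H)) ≤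
        opTupNorm (fun j => A j - z j • (1 : H →L[ℂ] H)))
    (hconv : Convex ℝ (W0 (fun j => A j - z0 j • (1 : H →L[ℂ] H)))) :
    sSup {v : ℝ | ∃ x : H, ‖x‖ = 1 ∧ v = opVar A x} =
      (⨅ z : Fin d → ℂ, opTupNorm (fun j => A j - z j • (1 : H →L[ℂ] H))) ^ 2 := by
  have hinf : ⨅ z : Fin d → ℂ, opTupNorm (fun j => A j - z j • (1 : H →L[ℂ] H)) =
      opTupNorm (fun j => A j - z0 j • (1 : H →L[ℂ] H)) :=
    le_antisymm (ciInf_le ⟨0, Set.forall_mem_range.2 fun _ => opTupNorm_nonneg _⟩ z0)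
      (le_ciInf hz0)
  have hvar : {v : ℝ | ∃ x : H, ‖x‖ = 1 ∧ v = opVar A x} =
      {v : ℝ | ∃ x : H, ‖x‖ = 1 ∧ v = opVar (fun j => A j - z0 j • (1 : H →L[ℂ] H)) x} := by
    ext v
    exact exists_congr fun x => and_congr_right fun hx => by rw [opVar_sub_smul_one A z0 hx]
  rw [hinf, hvar]
  exact sSup_opVar_eq_of_zero_mem_closure_W0 _
    (zero_mem_closure_W0_of_forall_opTupNorm_le A z0 hz0 hconv)
end
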